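/- arXiv:math/0201078 — 4 statements merged into one kernel-verified Lean document; each statement's English description precedes it below -/
import Mathlib

section
/- For all Hilbert spaces H, K and every Φ ∈ CB(B(H)), the slice-map amplification coincides with the matrix amplification: χ_{B(K)}(Φ) = Φ^(∞). In particular, the definition of Φ^(∞) does not depend on the choice of an orthonormal basis of K. -/
noncomputable section

open Filter Topology

/-- Normality (= w*-w*-continuity) of an operator on a dual space, encoded through the
existence of a pre-adjoint with respect to the given duality pairing. -/
def IsNormalOp {X Xs : Type} [NormedAddCommGroup X] [NormedSpace ℂ X]
    [NormedAddCommGroup Xs] [NormedSpace ℂ Xs]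
    (pair : Xs →L[ℂ] X →L[ℂ] ℂ) (Φ : X →L[ℂ] X) : Prop :=
  ∃ Φs : Xs →L[ℂ] Xs, ∀ (ρ : Xs) (x : X), pair (Φs ρ) x = pair ρ (Φ x)

/-- `MatBound mE mF Φ C` : all matrix amplifications of `Φ` are bounded by `C`. -/
def MatBound {E F : Type} (mE : ∀ n : ℕ, Matrix (Fin n) (Fin n) E → ℝ)
    (mF : ∀ n : ℕ, Matrix (Fin n) (Fin n) F → ℝ) (Φ : E → F) (C : ℝ) : Prop :=
  ∀ (n : ℕ) (x : Matrix (Fin n) (Fin n) E), mF n (x.map Φ) ≤ C * mE n x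

/-- Complete boundedness with respect to given matrix norm structures. -/
def IsCompletelyBounded {E F : Type} (mE : ∀ n : ℕ, Matrix (Fin n) (Fin n) E → ℝ)
    (mF : ∀ n : ℕ, Matrix (Fin n) (Fin n) F → ℝ) (Φ : E → F) : Prop :=
  ∃ C : ℝ, 0 ≤ C ∧ MatBound mE mF Φ C

/-- The completely bounded norm. -/
def cbNorm {E F : Type} (mE : ∀ n : ℕ, Matrix (Fin n) (Fin n) E → ℝ)
    (mF : ∀ n : ℕ, Matrix (Fin n) (Fin n) F → ℝ) (Φ : E → F) : ℝ :=
  sInf {C : ℝ | 0 ≤ C ∧ MatBound mE mF Φ C}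

/-- The norm of a `k × k` matrix of completely bounded maps, i.e. the norm in
`M_k(CB(E,F)) = CB(E, M_k(F))`. -/
def cbMatNorm {E F : Type} (mE : ∀ n : ℕ, Matrix (Fin n) (Fin n) E → ℝ)
    (mF : ∀ n : ℕ, Matrix (Fin n) (Fin n) F → ℝ) {k : ℕ}
    (Φ : Matrix (Fin k) (Fin k) (E → F)) : ℝ :=
  ⨆ n : ℕ, ⨆ x : { x : Matrix (Fin n) (Fin n) E // mE n x ≤ 1 },
    mF (n * k) (Matrix.of fun p q =>
      Φ (finProdFinEquiv.symm p).2 (finProdFinEquiv.symm q).2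
        (x.1 (finProdFinEquiv.symm p).1 (finProdFinEquiv.symm q).1))

/-- The point-weak* topology on the space of bounded operators of a dual space
(which is the w*-topology `σ(CB(X), X_* ⊗̂ X)` tested on elementary tensors). -/
def opWeakStar {X Xs : Type} [NormedAddCommGroup X] [NormedSpace ℂ X]
    [NormedAddCommGroup Xs] [NormedSpace ℂ Xs]
    (pair : Xs →L[ℂ] X →L[ℂ] ℂ) : TopologicalSpace (X →L[ℂ] X) :=
  TopologicalSpace.induced (fun Φ => fun p : Xs × X => pair p.1 (Φ p.2)) Pi.topologicalSpace

/-- Abstract encoding of an admissible pair `(M, N)` : either a pair of von Neumann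
algebras, or a pair of dual operator spaces at least one of which has property `S_σ`.
The first space `M`, its predual `Mstar` and the duality `pairM` are parameters; the
structure carries the second dual operator space `N`, the w*-spatial tensor product
`MN = M ⊗̄ N`, the preduals and duality pairings, the elementary tensor maps, the
identification `(M ⊗̄ N)_* = M_* ⊗̂ N_*` (encoded via the separation/density
properties), and Tomiyama's left and right slice maps `L` and `R`. -/
structure AmpData (M : Type) (Mstar : Type) [NormedAddCommGroup M] [NormedSpace ℂ M]
    [NormedAddCommGroup Mstar] [NormedSpace ℂ Mstar]
    (pairM : Mstar →L[ℂ] M →L[ℂ] ℂ) where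
  N : Type
  Nstar : Type
  MN : Type
  MNstar : Type
  [grpN : NormedAddCommGroup N]
  [modN : NormedSpace ℂ N]
  [grpNs : NormedAddCommGroup Nstar]
  [modNs : NormedSpace ℂ Nstar]
  [grpMN : NormedAddCommGroup MN]
  [modMN : NormedSpace ℂ MN]
  [grpMNs : NormedAddCommGroup MNstar]
  [modMNs : NormedSpace ℂ MNstar]
  pairN : Nstar →L[ℂ] N →L[ℂ] ℂ
  pairMN : MNstar →L[ℂ] MN →L[ℂ] ℂ
  tensor : M →L[ℂ] N →L[ℂ] MN
  tensorF : Mstar →L[ℂ] Nstar →L[ℂ] MNstar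
  pair_tensor : ∀ ρ τ S T, pairMN (tensorF ρ τ) (tensor S T) = pairM ρ S * pairN τ T
  sepM : ∀ S : M, (∀ ρ, pairM ρ S = 0) → S = 0
  sepN : ∀ T : N, (∀ τ, pairN τ T = 0) → T = 0
  sepMN : ∀ u : MN, (∀ ρ τ, pairMN (tensorF ρ τ) u = 0) → u = 0
  sepMNs : ∀ σ : MNstar, (∀ u : MN, pairMN σ u = 0) → σ = 0
  tensor_dense : ∀ σ : MNstar, (∀ S T, pairMN σ (tensor S T) = 0) → σ = 0
  L : Nstar →L[ℂ] MN →L[ℂ] M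
  pair_L : ∀ τ u ρ, pairM ρ (L τ u) = pairMN (tensorF ρ τ) u
  R : Mstar →L[ℂ] MN →L[ℂ] N
  pair_R : ∀ ρ u τ, pairN τ (R ρ u) = pairMN (tensorF ρ τ) u

attribute [instance] AmpData.grpN AmpData.modN AmpData.grpNs AmpData.modNs
  AmpData.grpMN AmpData.modMN AmpData.grpMNs AmpData.modMNs

variable {M Mstar : Type} [NormedAddCommGroup M] [NormedSpace ℂ M]
  [NormedAddCommGroup Mstar] [NormedSpace ℂ Mstar] {pairM : Mstar →L[ℂ] M →L[ℂ] ℂ}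

/-- The w*-topology on `CB(M ⊗̄ N)`, tested against the elementary tensors
`ρ ⊗ τ ⊗ u` of its predual `(M ⊗̄ N)_* ⊗̂ (M ⊗̄ N) = M_* ⊗̂ N_* ⊗̂ (M ⊗̄ N)`. -/
def AmpData.ampWeakStar (P : AmpData M Mstar pairM) :
    TopologicalSpace (P.MN →L[ℂ] P.MN) :=
  TopologicalSpace.induced
    (fun Θ => fun q : (Mstar × P.Nstar) × P.MN => P.pairMN (P.tensorF q.1.1 q.1.2) (Θ q.2))
    Pi.topologicalSpace


/-- **(Section 4, equation (11)).** For all Hilbert spaces `H`, `K` and every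
`Φ ∈ CB(B(H))`, the slice-map amplification coincides with the matrix amplification:
`χ_{B(K)}(Φ) = Φ^(∞)`. In particular, the definition of `Φ^(∞)` does not depend on the
choice of an orthonormal basis of `K`.

Here `M` encodes `B(H)`, `P.N` encodes `B(K)`, `P.MN` encodes
`B(H ⊗₂ K) = B(H) ⊗̄ B(K)`. A matrix representation of the elements of `B(H ⊗₂ K)`
(relative to an orthonormal basis of `K` indexed by `I`) is encoded through the matrix
coefficient functionals `ω i j ∈ B(K)_*`, so that the matrix of `u` is
`[L_{ω i j}(u)]`; `Φ^(∞)` is the map acting entrywise. A second such representation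
`(I', ω')` encodes a different choice of orthonormal basis. -/
theorem slice_amplification_eq_matrix_amplification
    (mnM : ∀ n : ℕ, Matrix (Fin n) (Fin n) M → ℝ)
    (P : AmpData M Mstar pairM)
    (Φ : M →L[ℂ] M) (hΦcb : IsCompletelyBounded mnM mnM ⇑Φ)
    -- a matrix representation indexed by I, and Φ^(∞) defined entrywise:
    (I : Type) (ω : I → I → P.Nstar)
    (hω : ∀ u : P.MN, (∀ i j, P.L (ω i j) u = 0) → u = 0)
    (Φinf : P.MN →L[ℂ] P.MN)
    (hΦinf : ∀ (u : P.MN) (i j : I), P.L (ω i j) (Φinf u) = Φ (P.L (ω i j) u))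
    -- the slice-map amplification χ_{B(K)}(Φ):
    (χΦ : P.MN →L[ℂ] P.MN)
    (hχΦ : ∀ (u : P.MN) (ρ : Mstar) (τ : P.Nstar),
      P.pairMN (P.tensorF ρ τ) (χΦ u) = pairM ρ (Φ (P.L τ u)))
    -- a second matrix representation (another orthonormal basis of K):
    (I' : Type) (ω' : I' → I' → P.Nstar)
    (hω' : ∀ u : P.MN, (∀ i j, P.L (ω' i j) u = 0) → u = 0)
    (Φinf' : P.MN →L[ℂ] P.MN)
    (hΦinf' : ∀ (u : P.MN) (i j : I'), P.L (ω' i j) (Φinf' u) = Φ (P.L (ω' i j) u)) :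
    χΦ = Φinf ∧ Φinf = Φinf' := by
  have key : ∀ (u : P.MN) (τ : P.Nstar), P.L τ (χΦ u) = Φ (P.L τ u) := by
    intro u τ
    have h : ∀ ρ : Mstar, pairM ρ (P.L τ (χΦ u) - Φ (P.L τ u)) = 0 := by
      intro ρ
      have := P.pair_L τ (χΦ u) ρ
      simp [map_sub, this, hχΦ u ρ τ]
    have := P.sepM _ h
    exact sub_eq_zero.mp this
  have hχ : χΦ = Φinf := by
    ext u
    have h : ∀ i j, P.L (ω i j) (χΦ u - Φinf u) = 0 := by
      intro i j
      simp [map_sub, key u (ω i j), hΦinf u i j]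
    have := hω _ h
    exact sub_eq_zero.mp this
  refine ⟨hχ, ?_⟩
  ext u
  have h : ∀ i j, P.L (ω' i j) (Φinf u - Φinf' u) = 0 := by
    intro i j
    have h1 : P.L (ω' i j) (Φinf u) = Φ (P.L (ω' i j) u) := by
      rw [← hχ]; exact key u (ω' i j)
    simp [map_sub, h1, hΦinf' u i j]
  exact sub_eq_zero.mp (hω' _ h)

end
end

section
/- Let (M, N) be an admissible pair and let N₀ ⊆ N be either a von Neumann subalgebra or a w*-closed dual operator subspace of N (according to whether (M, N) consists of von Neumann algebras or of dual operator spaces). Then for every Φ ∈ CB(M), the restriction of χ_N(Φ) to M ⊗̄ N₀ leaves M ⊗̄ N₀ invariant and χ_N(Φ)|_{M ⊗̄ N₀} = χ_{N₀}(Φ). -/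
noncomputable section

open Filter Topology

variable {M Mstar : Type} [NormedAddCommGroup M] [NormedSpace ℂ M]
  [NormedAddCommGroup Mstar] [NormedSpace ℂ Mstar] {pairM : Mstar →L[ℂ] M →L[ℂ] ℂ}

/-- **Theorem (Thm. 4.3).** Let `(M, N)` be an admissible pair and `N₀ ⊆ N` a von
Neumann subalgebra / w*-closed dual operator subspace of `N`.  Then for every
`Φ ∈ CB(M)`, the restriction of `χ_N(Φ)` to `M ⊗̄ N₀` leaves `M ⊗̄ N₀` invariant and
coincides with `χ_{N₀}(Φ)`.  Here `(M, N₀)` is encoded by a second `AmpData` bundle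
`P₀` over the same `M`, `e : N₀ → N` is the inclusion, `q : N_* → N₀_*` the
(pre-adjoint) restriction of normal functionals, and `j : M ⊗̄ N₀ → M ⊗̄ N` the
canonical w*-embedding. -/
theorem amplification_restriction
    (mnM : ∀ n : ℕ, Matrix (Fin n) (Fin n) M → ℝ)
    (P : AmpData M Mstar pairM)    -- the pair (M, N)
    (P₀ : AmpData M Mstar pairM)   -- the pair (M, N₀)
    (e : P₀.N →L[ℂ] P.N) (he : Function.Injective e)
    (q : P.Nstar →L[ℂ] P₀.Nstar)
    (hq : ∀ (τ : P.Nstar) (T₀ : P₀.N), P₀.pairN (q τ) T₀ = P.pairN τ (e T₀))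
    (hq_surj : Function.Surjective q)
    (j : P₀.MN →L[ℂ] P.MN) (hj : Function.Injective j)
    (hj_tensor : ∀ (S : M) (T₀ : P₀.N), j (P₀.tensor S T₀) = P.tensor S (e T₀))
    (hj_pair : ∀ (ρ : Mstar) (τ : P.Nstar) (u : P₀.MN),
      P.pairMN (P.tensorF ρ τ) (j u) = P₀.pairMN (P₀.tensorF ρ (q τ)) u)
    (Φ : M →L[ℂ] M) (hΦcb : IsCompletelyBounded mnM mnM ⇑Φ)
    (χΦ : P.MN →L[ℂ] P.MN)
    (hχΦ : ∀ (u : P.MN) (ρ : Mstar) (τ : P.Nstar),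
      P.pairMN (P.tensorF ρ τ) (χΦ u) = pairM ρ (Φ (P.L τ u)))
    (χ₀Φ : P₀.MN →L[ℂ] P₀.MN)
    (hχ₀Φ : ∀ (u : P₀.MN) (ρ : Mstar) (τ : P₀.Nstar),
      P₀.pairMN (P₀.tensorF ρ τ) (χ₀Φ u) = pairM ρ (Φ (P₀.L τ u))) :
    (∀ u : P₀.MN, χΦ (j u) ∈ Set.range j) ∧
    (∀ u : P₀.MN, χΦ (j u) = j (χ₀Φ u)) := by
  have hL : ∀ (τ : P.Nstar) (u : P₀.MN), P.L τ (j u) = P₀.L (q τ) u := by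
    intro τ u
    have h : P.L τ (j u) - P₀.L (q τ) u = 0 := by
      apply P.sepM
      intro ρ
      simp only [map_sub, ContinuousLinearMap.sub_apply]
      rw [P.pair_L, P₀.pair_L, hj_pair]
      ring
    have := sub_eq_zero.mp h
    exact this
  have key : ∀ u : P₀.MN, χΦ (j u) = j (χ₀Φ u) := by
    intro u
    have h : χΦ (j u) - j (χ₀Φ u) = 0 := by
      apply P.sepMN
      intro ρ τ
      simp only [map_sub]
      rw [hχΦ, hj_pair, hχ₀Φ, hL]
      ring
    exact sub_eq_zero.mp h
  exact ⟨fun u => ⟨χ₀Φ u, (key u).symm⟩, key⟩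

end
end

section
/- Let (M, N) be an admissible pair. If Ψ ∈ CB^σ(N) is normal, then for every Φ ∈ CB(M) the amplifications commute: (Φ ⊗ id_N) ∘ (id_M ⊗ Ψ) = (id_M ⊗ Ψ) ∘ (Φ ⊗ id_N) as maps on M ⊗̄ N. -/
noncomputable section

open Filter Topology

variable {M Mstar : Type} [NormedAddCommGroup M] [NormedSpace ℂ M]
  [NormedAddCommGroup Mstar] [NormedSpace ℂ Mstar] {pairM : Mstar →L[ℂ] M →L[ℂ] ℂ}

/-- **Theorem (Thm. 5.5).** Let `(M, N)` be an admissible pair. If `Ψ ∈ CB^σ(N)` is a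
normal completely bounded map, then for every `Φ ∈ CB(M)` the amplifications commute:
`(Φ ⊗ id_N)(id_M ⊗ Ψ) = (id_M ⊗ Ψ)(Φ ⊗ id_N)` on `M ⊗̄ N`. -/
theorem amplifications_commute
    (mnM : ∀ n : ℕ, Matrix (Fin n) (Fin n) M → ℝ)
    (P : AmpData M Mstar pairM)
    (mnN : ∀ n : ℕ, Matrix (Fin n) (Fin n) P.N → ℝ)
    (Φ : M →L[ℂ] M) (hΦcb : IsCompletelyBounded mnM mnM ⇑Φ)
    (Ψ : P.N →L[ℂ] P.N) (hΨcb : IsCompletelyBounded mnN mnN ⇑Ψ)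
    (hΨnormal : IsNormalOp P.pairN Ψ)
    (ampΦ : P.MN →L[ℂ] P.MN)   -- Φ ⊗ id_N
    (hampΦ : ∀ (u : P.MN) (ρ : Mstar) (τ : P.Nstar),
      P.pairMN (P.tensorF ρ τ) (ampΦ u) = pairM ρ (Φ (P.L τ u)))
    (ampΨ : P.MN →L[ℂ] P.MN)   -- id_M ⊗ Ψ
    (hampΨ : ∀ (u : P.MN) (ρ : Mstar) (τ : P.Nstar),
      P.pairMN (P.tensorF ρ τ) (ampΨ u) = P.pairN τ (Ψ (P.R ρ u))) :
    ampΦ.comp ampΨ = ampΨ.comp ampΦ := by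
  obtain ⟨Ψs, hΨs⟩ := hΨnormal
  ext u
  simp only [ContinuousLinearMap.comp_apply]
  rw [← sub_eq_zero]
  apply P.sepMN
  intro ρ τ
  have hL : P.L τ (ampΨ u) = P.L (Ψs τ) u := by
    rw [← sub_eq_zero]
    apply P.sepM
    intro ρ'
    have : pairM ρ' (P.L τ (ampΨ u)) - pairM ρ' (P.L (Ψs τ) u) = 0 := by
      rw [P.pair_L, P.pair_L, hampΨ, ← hΨs, P.pair_R]
      ring
    simpa [map_sub] using this
  have h1 : P.pairMN (P.tensorF ρ τ) (ampΦ (ampΨ u)) = pairM ρ (Φ (P.L (Ψs τ) u)) := by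
    rw [hampΦ, hL]
  have h2 : P.pairMN (P.tensorF ρ τ) (ampΨ (ampΦ u)) = pairM ρ (Φ (P.L (Ψs τ) u)) := by
    rw [hampΨ, ← hΨs, P.pair_R, hampΦ]
  rw [map_sub, h1, h2, sub_self]

end
end

section
/- Let (M, N) be an admissible pair and Φ ∈ CB(M). Suppose Θ : M ⊗̄ N → M ⊗̄ N is any map which, for some non-zero element n ∈ N, satisfies: (i) Θ commutes with the maps id_M ⊗ τn : u ↦ L_τ(u) ⊗ n for every τ ∈ N_*, and (ii) Θ coincides with Φ ⊗ id_N on M ⊗ n = {m ⊗ n : m ∈ M}. Then Θ = Φ ⊗ id_N. -/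
noncomputable section

open Filter Topology

variable {M Mstar : Type} [NormedAddCommGroup M] [NormedSpace ℂ M]
  [NormedAddCommGroup Mstar] [NormedSpace ℂ Mstar] {pairM : Mstar →L[ℂ] M →L[ℂ] ℂ}

/-- **Proposition (generalized Ge–Kadison Lemma, Prop. 6.3).** Let `(M, N)` be an
admissible pair and `Φ ∈ CB(M)`. Suppose `Θ : M ⊗̄ N → M ⊗̄ N` is *any* map which, for
some non-zero `n ∈ N`, (i) commutes with the slice maps `id_M ⊗ τn : u ↦ L_τ(u) ⊗ n`
for every `τ ∈ N_*`, and (ii) coincides with `Φ ⊗ id_N` on `M ⊗ n`.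
Then `Θ = Φ ⊗ id_N`. -/
theorem ge_kadison
    (mnM : ∀ n : ℕ, Matrix (Fin n) (Fin n) M → ℝ)
    (P : AmpData M Mstar pairM)
    (Φ : M →L[ℂ] M) (hΦcb : IsCompletelyBounded mnM mnM ⇑Φ)
    (ampΦ : P.MN →L[ℂ] P.MN)   -- Φ ⊗ id_N
    (hampΦ : ∀ (u : P.MN) (ρ : Mstar) (τ : P.Nstar),
      P.pairMN (P.tensorF ρ τ) (ampΦ u) = pairM ρ (Φ (P.L τ u)))
    (Θ : P.MN → P.MN)
    (n : P.N) (hn : n ≠ 0)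
    -- (i) Θ commutes with the maps id_M ⊗ τn : u ↦ L_τ(u) ⊗ n (τ ∈ N_*)
    (hcomm : ∀ τ : P.Nstar,
      (fun u => P.tensor (P.L τ u) n) ∘ Θ = Θ ∘ (fun u => P.tensor (P.L τ u) n))
    -- (ii) Θ coincides with Φ ⊗ id_N on M ⊗ n
    (hMn : ∀ m : M, Θ (P.tensor m n) = ampΦ (P.tensor m n)) :
    ∀ u : P.MN, Θ u = ampΦ u := by
  obtain ⟨σ, hσ⟩ : ∃ σ, P.pairN σ n ≠ 0 := by
    by_contra h
    push_neg at h
    exact hn (P.sepN n h)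
  have hL : ∀ (τ : P.Nstar) (m : M), P.L τ (P.tensor m n) = P.pairN τ n • m := by
    intro τ m
    refine eq_of_sub_eq_zero (P.sepM _ fun ρ => ?_)
    simp [P.pair_L, P.pair_tensor, smul_eq_mul]
    ring
  intro u
  refine eq_of_sub_eq_zero (P.sepMN _ fun ρ τ => ?_)
  rw [map_sub]
  have h1 : P.tensor (P.L τ (Θ u)) n = ampΦ (P.tensor (P.L τ u) n) := by
    have := congrFun (hcomm τ) u
    simp only [Function.comp_apply] at this
    rw [this, hMn]
  have h2 := congrArg (P.pairMN (P.tensorF ρ σ)) h1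
  rw [P.pair_tensor, hampΦ, hL, map_smul, map_smul, smul_eq_mul] at h2
  have h3 : pairM ρ (P.L τ (Θ u)) = pairM ρ (Φ (P.L τ u)) :=
    mul_right_cancel₀ hσ (by rw [mul_comm] at h2; linear_combination h2)
  rw [P.pair_L τ (Θ u) ρ] at h3
  rw [h3, hampΦ, sub_self]

end
end
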